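/- The set of pairs (max S₀p, max S₁p) as p ranges over [0,1/2]⁴ is exactly the closed triangle in ℝ² with vertices (0,0), (1/2,1), and (1,1/2); equivalently, a pair (x, y) arises as (max S₀p, max S₁p) for some p ∈ [0,1/2]⁴ if and only if 2x − y ≥ 0, 2y − x ≥ 0, and x + y ≤ 3/2. -/
import Mathlib


open Finset

/-- The signed sum `±(x₁₁−¼) ± (x₁₂−¼) ± (x₂₁−¼) ± (x₂₂−¼)` over the four components of `x`,
with a `+` sign exactly where the sign choice `s` is `true`. -/
noncomputable def Sval (x : Fin 2 → Fin 2 → ℝ) (s : Fin 2 → Fin 2 → Bool) : ℝ :=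
  ∑ i : Fin 2, ∑ j : Fin 2, (if s i j then (1 : ℝ) else -1) * (x i j - 1 / 4)

/-- The number of `+` signs in a sign choice. -/
def plusCount (s : Fin 2 → Fin 2 → Bool) : ℕ :=
  (Finset.univ.filter fun ij : Fin 2 × Fin 2 => s ij.1 ij.2 = true).card

/-- `max Sx`: the maximum of the signed sums over all 16 sign choices. -/
noncomputable def maxS (x : Fin 2 → Fin 2 → ℝ) : ℝ :=
  Finset.univ.sup' Finset.univ_nonempty (Sval x)

/-- `max S₀x`: the maximum over sign choices with an even number of `+` signs. -/
noncomputable def maxS0 (x : Fin 2 → Fin 2 → ℝ) : ℝ :=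
  (Finset.univ.filter fun s : Fin 2 → Fin 2 → Bool => Even (plusCount s)).sup'
    ⟨fun _ _ => false, by decide⟩ (Sval x)

/-- `max S₁x`: the maximum over sign choices with an odd number of `+` signs. -/
noncomputable def maxS1 (x : Fin 2 → Fin 2 → ℝ) : ℝ :=
  (Finset.univ.filter fun s : Fin 2 → Fin 2 → Bool => ¬ Even (plusCount s)).sup'
    ⟨fun i j => i == 0 && j == 0, by decide⟩ (Sval x)

/-- `r ∈ S₀x`: `r` is one of the signed sums with an even number of `+` signs. -/
def memS0 (x : Fin 2 → Fin 2 → ℝ) (r : ℝ) : Prop :=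
  ∃ s : Fin 2 → Fin 2 → Bool, Even (plusCount s) ∧ Sval x s = r

lemma sval_eq (p : Fin 2 → Fin 2 → ℝ) (s : Fin 2 → Fin 2 → Bool) :
    Sval p s = (if s 0 0 then (1:ℝ) else -1) * (p 0 0 - 1/4)
      + (if s 0 1 then (1:ℝ) else -1) * (p 0 1 - 1/4)
      + (if s 1 0 then (1:ℝ) else -1) * (p 1 0 - 1/4)
      + (if s 1 1 then (1:ℝ) else -1) * (p 1 1 - 1/4) := by
  simp [Sval, Fin.sum_univ_two]; ring

def sflip (k : Fin 2 × Fin 2) (s : Fin 2 → Fin 2 → Bool) : Fin 2 → Fin 2 → Bool :=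
  fun i j => if (i, j) = k then !(s i j) else s i j

lemma sflip_parity : ∀ (k : Fin 2 × Fin 2) (s : Fin 2 → Fin 2 → Bool),
    Even (plusCount (sflip k s)) ↔ ¬ Even (plusCount s) := by decide

lemma sval_sflip (p : Fin 2 → Fin 2 → ℝ) (s : Fin 2 → Fin 2 → Bool) (k : Fin 2 × Fin 2) :
    Sval p (sflip k s) = Sval p s - 2 * ((if s k.1 k.2 then (1:ℝ) else -1) * (p k.1 k.2 - 1/4)) := by
  rcases k with ⟨i, j⟩
  fin_cases i <;> fin_cases j <;> rw [sval_eq, sval_eq] <;>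
    simp only [sflip, Prod.mk.injEq] <;>
    rcases h : s 0 0 <;> rcases h1 : s 0 1 <;> rcases h2 : s 1 0 <;> rcases h3 : s 1 1 <;>
    simp_all <;> ring

lemma le_maxS0 (p : Fin 2 → Fin 2 → ℝ) (s : Fin 2 → Fin 2 → Bool) (h : Even (plusCount s)) :
    Sval p s ≤ maxS0 p :=
  Finset.le_sup' (Sval p) (Finset.mem_filter.2 ⟨Finset.mem_univ _, h⟩)

lemma le_maxS1 (p : Fin 2 → Fin 2 → ℝ) (s : Fin 2 → Fin 2 → Bool) (h : ¬ Even (plusCount s)) :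
    Sval p s ≤ maxS1 p :=
  Finset.le_sup' (Sval p) (Finset.mem_filter.2 ⟨Finset.mem_univ _, h⟩)

lemma maxS0_le (p : Fin 2 → Fin 2 → ℝ) (B : ℝ)
    (h : ∀ s, Even (plusCount s) → Sval p s ≤ B) : maxS0 p ≤ B :=
  Finset.sup'_le _ _ fun s hs => h s (Finset.mem_filter.1 hs).2

lemma maxS1_le (p : Fin 2 → Fin 2 → ℝ) (B : ℝ)
    (h : ∀ s, ¬ Even (plusCount s) → Sval p s ≤ B) : maxS1 p ≤ B :=
  Finset.sup'_le _ _ fun s hs => h s (Finset.mem_filter.1 hs).2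

lemma exists_maxS0 (p : Fin 2 → Fin 2 → ℝ) :
    ∃ s, Even (plusCount s) ∧ maxS0 p = Sval p s := by
  obtain ⟨s, hs, h⟩ := Finset.exists_mem_eq_sup'
    (⟨fun _ _ => false, by decide⟩ : ((Finset.univ.filter fun s : Fin 2 → Fin 2 → Bool => Even (plusCount s))).Nonempty ) (Sval p)
  exact ⟨s, (Finset.mem_filter.1 hs).2, h⟩

lemma exists_maxS1 (p : Fin 2 → Fin 2 → ℝ) :
    ∃ s, ¬ Even (plusCount s) ∧ maxS1 p = Sval p s := by
  obtain ⟨s, hs, h⟩ := Finset.exists_mem_eq_sup'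
    (⟨fun i j => i == 0 && j == 0, by decide⟩ : ((Finset.univ.filter fun s : Fin 2 → Fin 2 → Bool => ¬ Even (plusCount s))).Nonempty) (Sval p)
  exact ⟨s, (Finset.mem_filter.1 hs).2, h⟩

-- constraint: 2*maxS0 - maxS1 ≥ 0
lemma two_maxS0_ge (p : Fin 2 → Fin 2 → ℝ) : maxS1 p ≤ 2 * maxS0 p := by
  obtain ⟨s, hs, hy⟩ := exists_maxS1 p
  have h1 := le_maxS0 p (sflip (0,0) s) ((sflip_parity _ _).2 hs)
  have h2 := le_maxS0 p (sflip (0,1) s) ((sflip_parity _ _).2 hs)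
  have h3 := le_maxS0 p (sflip (1,0) s) ((sflip_parity _ _).2 hs)
  have h4 := le_maxS0 p (sflip (1,1) s) ((sflip_parity _ _).2 hs)
  rw [sval_sflip] at h1 h2 h3 h4
  have he := sval_eq p s
  simp only at h1 h2 h3 h4
  linarith

lemma two_maxS1_ge (p : Fin 2 → Fin 2 → ℝ) : maxS0 p ≤ 2 * maxS1 p := by
  obtain ⟨s, hs, hy⟩ := exists_maxS0 p
  have hs' : ∀ k, ¬ Even (plusCount (sflip k s)) := by
    intro k h
    exact ((sflip_parity k s).1 h) hs
  have h1 := le_maxS1 p (sflip (0,0) s) (hs' _)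
  have h2 := le_maxS1 p (sflip (0,1) s) (hs' _)
  have h3 := le_maxS1 p (sflip (1,0) s) (hs' _)
  have h4 := le_maxS1 p (sflip (1,1) s) (hs' _)
  rw [sval_sflip] at h1 h2 h3 h4
  have he := sval_eq p s
  simp only at h1 h2 h3 h4
  linarith

lemma term_le (b c : Bool) (u : ℝ) (h0 : 0 ≤ u) (h1 : u ≤ 1/2) :
    (if b then (1:ℝ) else -1) * (u - 1/4) + (if c then (1:ℝ) else -1) * (u - 1/4) ≤ 1/2 := by
  cases b <;> cases c <;> simp <;> linarith

lemma term_eq (b c : Bool) (u : ℝ) (h : b ≠ c) :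
    (if b then (1:ℝ) else -1) * (u - 1/4) + (if c then (1:ℝ) else -1) * (u - 1/4) = 0 := by
  cases b <;> cases c <;> simp_all

lemma sval_add_le (p : Fin 2 → Fin 2 → ℝ) (hp : ∀ i j, p i j ∈ Set.Icc (0:ℝ) (1/2))
    (s s' : Fin 2 → Fin 2 → Bool) (h : Even (plusCount s)) (h' : ¬ Even (plusCount s')) :
    Sval p s + Sval p s' ≤ 3/2 := by
  have hne : ∃ i j, s i j ≠ s' i j := by
    by_contra hc
    push_neg at hc
    have : s = s' := funext fun i => funext fun j => hc i j
    rw [this] at h; exact h' h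
  obtain ⟨i, j, hij⟩ := hne
  have b00 := (hp 0 0); have b01 := (hp 0 1); have b10 := (hp 1 0); have b11 := (hp 1 1)
  rw [Set.mem_Icc] at b00 b01 b10 b11
  have t00 := term_le (s 0 0) (s' 0 0) (p 0 0) b00.1 b00.2
  have t01 := term_le (s 0 1) (s' 0 1) (p 0 1) b01.1 b01.2
  have t10 := term_le (s 1 0) (s' 1 0) (p 1 0) b10.1 b10.2
  have t11 := term_le (s 1 1) (s' 1 1) (p 1 1) b11.1 b11.2
  rw [sval_eq, sval_eq]
  fin_cases i <;> fin_cases j <;>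
    [have z := term_eq (s 0 0) (s' 0 0) (p 0 0) hij;
     have z := term_eq (s 0 1) (s' 0 1) (p 0 1) hij;
     have z := term_eq (s 1 0) (s' 1 0) (p 1 0) hij;
     have z := term_eq (s 1 1) (s' 1 1) (p 1 1) hij] <;>
    linarith

lemma maxS0_add_maxS1_le (p : Fin 2 → Fin 2 → ℝ)
    (hp : ∀ i j, p i j ∈ Set.Icc (0:ℝ) (1/2)) : maxS0 p + maxS1 p ≤ 3/2 := by
  obtain ⟨s, hs, h0⟩ := exists_maxS0 p
  obtain ⟨s', hs', h1⟩ := exists_maxS1 p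
  rw [h0, h1]
  exact sval_add_le p hp s s' hs hs'

lemma parity_xor : ∀ s : Fin 2 → Fin 2 → Bool,
    Even (plusCount s) ↔ (xor (xor (s 0 0) (s 0 1)) (xor (s 1 0) (s 1 1)) = false) := by
  decide

lemma construct1 (x y : ℝ) (hxy : y ≤ x) (h1 : 0 ≤ 2*x - y) (h2 : 0 ≤ 2*y - x)
    (h3 : x + y ≤ 3/2) :
    ∃ p : Fin 2 → Fin 2 → ℝ,
      (∀ i j, p i j ∈ Set.Icc (0:ℝ) (1/2)) ∧ maxS0 p = x ∧ maxS1 p = y := by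
  refine ⟨![![1/4+(x-y)/2, 1/4+(x+y)/6], ![1/4+(x+y)/6, 1/4+(x+y)/6]], ?_, ?_, ?_⟩
  · intro i j
    fin_cases i <;> fin_cases j <;> simp [Set.mem_Icc] <;> constructor <;> linarith
  · apply le_antisymm
    · apply maxS0_le
      intro s hs
      rw [parity_xor] at hs
      rw [sval_eq]
      rcases h00 : s 0 0 <;> rcases h01 : s 0 1 <;> rcases h10 : s 1 0 <;> rcases h11 : s 1 1 <;>
        simp only [h00, h01, h10, h11] at hs ⊢ <;> simp_all <;> linarith
    · have h := le_maxS0 ![![1/4+(x-y)/2, 1/4+(x+y)/6], ![1/4+(x+y)/6, 1/4+(x+y)/6]] (fun _ _ => true) (by decide)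
      rw [sval_eq] at h
      simp at h
      linarith
  · apply le_antisymm
    · apply maxS1_le
      intro s hs
      rw [parity_xor] at hs
      rw [sval_eq]
      rcases h00 : s 0 0 <;> rcases h01 : s 0 1 <;> rcases h10 : s 1 0 <;> rcases h11 : s 1 1 <;>
        simp only [h00, h01, h10, h11] at hs ⊢ <;> simp_all <;> linarith
    · have h := le_maxS1 ![![1/4+(x-y)/2, 1/4+(x+y)/6], ![1/4+(x+y)/6, 1/4+(x+y)/6]] (fun i j => !(i == 0 && j == 0)) (by decide)
      rw [sval_eq] at h
      simp at h
      linarith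

lemma construct2 (x y : ℝ) (hxy : x ≤ y) (h1 : 0 ≤ 2*x - y) (h2 : 0 ≤ 2*y - x)
    (h3 : x + y ≤ 3/2) :
    ∃ p : Fin 2 → Fin 2 → ℝ,
      (∀ i j, p i j ∈ Set.Icc (0:ℝ) (1/2)) ∧ maxS0 p = x ∧ maxS1 p = y := by
  refine ⟨![![1/4-(y-x)/2, 1/4+(x+y)/6], ![1/4+(x+y)/6, 1/4+(x+y)/6]], ?_, ?_, ?_⟩
  · intro i j
    fin_cases i <;> fin_cases j <;> simp [Set.mem_Icc] <;> constructor <;> linarith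
  · apply le_antisymm
    · apply maxS0_le
      intro s hs
      rw [parity_xor] at hs
      rw [sval_eq]
      rcases h00 : s 0 0 <;> rcases h01 : s 0 1 <;> rcases h10 : s 1 0 <;> rcases h11 : s 1 1 <;>
        simp only [h00, h01, h10, h11] at hs ⊢ <;> simp_all <;> linarith
    · have h := le_maxS0 ![![1/4-(y-x)/2, 1/4+(x+y)/6], ![1/4+(x+y)/6, 1/4+(x+y)/6]]
        (fun _ _ => true) (by decide)
      rw [sval_eq] at h
      simp at h
      linarith
  · apply le_antisymm
    · apply maxS1_le
      intro s hs
      rw [parity_xor] at hs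
      rw [sval_eq]
      rcases h00 : s 0 0 <;> rcases h01 : s 0 1 <;> rcases h10 : s 1 0 <;> rcases h11 : s 1 1 <;>
        simp only [h00, h01, h10, h11] at hs ⊢ <;> simp_all <;> linarith
    · have h := le_maxS1 ![![1/4-(y-x)/2, 1/4+(x+y)/6], ![1/4+(x+y)/6, 1/4+(x+y)/6]]
        (fun i j => !(i == 0 && j == 0)) (by decide)
      rw [sval_eq] at h
      simp at h
      linarith

lemma hull_eq : convexHull ℝ {((0:ℝ),(0:ℝ)), ((1/2:ℝ),(1:ℝ)), ((1:ℝ),(1/2:ℝ))}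
    = {xy : ℝ × ℝ | 0 ≤ 2 * xy.1 - xy.2 ∧ 0 ≤ 2 * xy.2 - xy.1 ∧ xy.1 + xy.2 ≤ 3 / 2} := by
  apply le_antisymm
  · apply convexHull_min
    · intro z hz
      rcases hz with h | h | h <;> subst h <;> norm_num
    · intro u hu v hv a b ha hb hab
      simp only [Set.mem_setOf_eq] at hu hv ⊢
      obtain ⟨hu1, hu2, hu3⟩ := hu
      obtain ⟨hv1, hv2, hv3⟩ := hv
      simp only [Prod.fst_add, Prod.snd_add, Prod.smul_fst, Prod.smul_snd, smul_eq_mul]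
      refine ⟨?_, ?_, ?_⟩ <;>
        nlinarith [mul_nonneg ha hu1, mul_nonneg hb hv1, mul_nonneg ha hu2,
          mul_nonneg hb hv2, mul_nonneg ha (sub_nonneg.2 hu3), mul_nonneg hb (sub_nonneg.2 hv3)]
  · intro z hz
    obtain ⟨hz1, hz2, hz3⟩ := hz
    have h := Finset.centerMass_mem_convexHull (Finset.univ : Finset (Fin 3))
      (s := {((0:ℝ),(0:ℝ)), ((1/2:ℝ),(1:ℝ)), ((1:ℝ),(1/2:ℝ))})
      (w := ![1 - (2*z.1 + 2*z.2)/3, (4*z.2 - 2*z.1)/3, (4*z.1 - 2*z.2)/3])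
      (z := ![((0:ℝ),(0:ℝ)), ((1/2:ℝ),(1:ℝ)), ((1:ℝ),(1/2:ℝ))])
      (by intro i _; fin_cases i <;> simp <;> linarith)
      (by simp [Fin.sum_univ_three]; linarith)
      (by intro i _; fin_cases i <;> simp)
    convert h using 1
    simp [Finset.centerMass, Fin.sum_univ_three]
    have : (1 - (2*z.1 + 2*z.2)/3) + ((4*z.2 - 2*z.1)/3) + ((4*z.1 - 2*z.2)/3) = 1 := by ring
    rw [Prod.ext_iff]
    simp [Prod.smul_fst, Prod.smul_snd, smul_eq_mul]
    constructor <;> ring_nf <;> nlinarith [this]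


/-- the set of pairs `(max S₀p, max S₁p)`, as `p` ranges over `[0,1/2]⁴`, is
exactly the closed triangle with vertices `(0,0)`, `(1/2,1)`, `(1,1/2)`; equivalently, it is
the set of `(x, y)` with `2x − y ≥ 0`, `2y − x ≥ 0`, and `x + y ≤ 3/2`. -/
theorem maxS0_maxS1_range :
    {xy : ℝ × ℝ | ∃ p : Fin 2 → Fin 2 → ℝ,
        (∀ i j, p i j ∈ Set.Icc (0 : ℝ) (1 / 2)) ∧ maxS0 p = xy.1 ∧ maxS1 p = xy.2}
      = convexHull ℝ {((0 : ℝ), (0 : ℝ)), ((1 / 2 : ℝ), (1 : ℝ)), ((1 : ℝ), (1 / 2 : ℝ))} ∧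
    {xy : ℝ × ℝ | ∃ p : Fin 2 → Fin 2 → ℝ,
        (∀ i j, p i j ∈ Set.Icc (0 : ℝ) (1 / 2)) ∧ maxS0 p = xy.1 ∧ maxS1 p = xy.2}
      = {xy : ℝ × ℝ | 0 ≤ 2 * xy.1 - xy.2 ∧ 0 ≤ 2 * xy.2 - xy.1 ∧ xy.1 + xy.2 ≤ 3 / 2} := by
  have key : {xy : ℝ × ℝ | ∃ p : Fin 2 → Fin 2 → ℝ,
        (∀ i j, p i j ∈ Set.Icc (0 : ℝ) (1 / 2)) ∧ maxS0 p = xy.1 ∧ maxS1 p = xy.2}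
      = {xy : ℝ × ℝ | 0 ≤ 2 * xy.1 - xy.2 ∧ 0 ≤ 2 * xy.2 - xy.1 ∧ xy.1 + xy.2 ≤ 3 / 2} := by
    ext ⟨x, y⟩
    simp only [Set.mem_setOf_eq]
    constructor
    · rintro ⟨p, hp, h0, h1⟩
      have c1 := two_maxS0_ge p
      have c2 := two_maxS1_ge p
      have c3 := maxS0_add_maxS1_le p hp
      refine ⟨by linarith, by linarith, by linarith⟩
    · rintro ⟨c1, c2, c3⟩
      rcases le_total y x with hxy | hxy
      · exact construct1 x y hxy c1 c2 c3
      · exact construct2 x y hxy c1 c2 c3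
  exact ⟨key.trans hull_eq.symm, key⟩
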